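/- arXiv:1611.07255 — 2 statements merged into one kernel-verified Lean document; each statement's English description precedes it below -/
import Mathlib

section
/- The σ-reduction (the contextual closure of the rules σ₁: (λx.M)NL → (λx.ML)N with x ∉ FV(L), and σ₃: V((λx.L)N) → (λx.VL)N with x ∉ FV(V), where V is a value) is strongly normalizing on λ-terms. -/
/-- Terms of the call-by-value λ-calculus, in de Bruijn notation. -/
inductive Term : Type
  | var : ℕ → Term
  | lam : Term → Term
  | app : Term → Term → Term

namespace Term

/-- Values are variables and abstractions. -/
def isValue : Term → Prop
  | var _ => True
  | lam _ => True
  | app _ _ => False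

/-- Shift free de Bruijn indices ≥ d by one. -/
def lift (d : ℕ) : Term → Term
  | var n => if n < d then var n else var (n+1)
  | lam M => lam (lift (d+1) M)
  | app M N => app (lift d M) (lift d N)

/-- Capture-avoiding substitution of `V` for index `k`. -/
def subst : Term → ℕ → Term → Term
  | var n, k, V => if n = k then V else if k < n then var (n-1) else var n
  | lam M, k, V => lam (subst M (k+1) (lift 0 V))
  | app M N, k, V => app (subst M k V) (subst N k V)

/-- Apply a term to a list of arguments: `appList M [M₁,…,Mₘ] = M M₁ … Mₘ`. -/
def appList : Term → List Term → Term
  | M, [] => M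
  | M, N :: Ns => appList (app M N) Ns

/-- Root σ-reduction rules σ₁ and σ₃ (freshness handled by lifting). -/
inductive SigmaBase : Term → Term → Prop
  | sigma1 (M N L : Term) :
      SigmaBase (app (app (lam M) N) L) (app (lam (app M (lift 0 L))) N)
  | sigma3 (V L N : Term) : isValue V →
      SigmaBase (app V (app (lam L) N)) (app (lam (app (lift 0 V) L)) N)

/-- Root rules of v-reduction: β_v, σ₁ and σ₃. -/
inductive VBase : Term → Term → Prop
  | beta (M V : Term) : isValue V → VBase (app (lam M) V) (subst M 0 V)
  | sigma1 (M N L : Term) :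
      VBase (app (app (lam M) N) L) (app (lam (app M (lift 0 L))) N)
  | sigma3 (V L N : Term) : isValue V →
      VBase (app V (app (lam L) N)) (app (lam (app (lift 0 V) L)) N)

/-- Contextual closure of a root relation. -/
inductive Ctx (r : Term → Term → Prop) : Term → Term → Prop
  | base {M M'} : r M M' → Ctx r M M'
  | lam {M M'} : Ctx r M M' → Ctx r (lam M) (lam M')
  | appL {M M'} (N : Term) : Ctx r M M' → Ctx r (app M N) (app M' N)
  | appR (M : Term) {N N'} : Ctx r N N' → Ctx r (app M N) (app M N')

/-- σ-reduction: contextual closure of σ₁ ∪ σ₃. -/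
def SigmaRed : Term → Term → Prop := Ctx SigmaBase

/-- v-reduction: contextual closure of β_v ∪ σ₁ ∪ σ₃. -/
def Red : Term → Term → Prop := Ctx VBase

/-- Head β_v-reduction. -/
inductive HeadBeta : Term → Term → Prop
  | beta (M V : Term) (Ms : List Term) : isValue V →
      HeadBeta (appList (app (lam M) V) Ms) (appList (subst M 0 V) Ms)
  | right (V : Term) {N N'} (Ms : List Term) : isValue V → HeadBeta N N' →
      HeadBeta (appList (app V N) Ms) (appList (app V N') Ms)

/-- Head σ-reduction. -/
inductive HeadSigma : Term → Term → Prop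
  | sigma1 (M N L : Term) (Ms : List Term) :
      HeadSigma (appList (app (app (lam M) N) L) Ms)
                (appList (app (lam (app M (lift 0 L))) N) Ms)
  | sigma3 (V L N : Term) (Ms : List Term) : isValue V →
      HeadSigma (appList (app V (app (lam L) N)) Ms)
                (appList (app (lam (app (lift 0 V) L)) N) Ms)
  | right (V : Term) {N N'} (Ms : List Term) : isValue V → HeadSigma N N' →
      HeadSigma (appList (app V N) Ms) (appList (app V N') Ms)

/-- Head v-reduction: head β_v ∪ head σ. -/
def HeadRed (M N : Term) : Prop := HeadBeta M N ∨ HeadSigma M N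

/-- Internal v-reduction: v-steps that are not head v-steps. -/
def IntRed (M N : Term) : Prop := Red M N ∧ ¬ HeadRed M N

/-- Parallel reduction of the shuffling calculus λ_v^σ. -/
inductive Par : Term → Term → Prop
  | var (x : ℕ) {Ms Ms' : List Term} : List.Forall₂ Par Ms Ms' →
      Par (appList (var x) Ms) (appList (var x) Ms')
  | lam {M M'} {Ms Ms' : List Term} : Par M M' → List.Forall₂ Par Ms Ms' →
      Par (appList (lam M) Ms) (appList (lam M') Ms')
  | beta {M M' V V'} {Ms Ms' : List Term} : isValue V → isValue V' →
      Par M M' → Par V V' → List.Forall₂ Par Ms Ms' →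
      Par (appList (app (lam M) V) Ms) (appList (subst M' 0 V') Ms')
  | sigma1 {M M' N N' L L'} {Ms Ms' : List Term} :
      Par M M' → Par N N' → Par L L' → List.Forall₂ Par Ms Ms' →
      Par (appList (app (app (lam M) N) L) Ms)
          (appList (app (lam (app M' (lift 0 L'))) N') Ms')
  | sigma3 {V V' L L' N N'} {Ms Ms' : List Term} : isValue V → isValue V' →
      Par V V' → Par L L' → Par N N' → List.Forall₂ Par Ms Ms' →
      Par (appList (app V (app (lam L) N)) Ms)
          (appList (app (lam (app (lift 0 V') L')) N') Ms')

/-- Internal parallel reduction. -/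
inductive IPar : Term → Term → Prop
  | lam {N N'} : Par N N' → IPar (lam N) (lam N')
  | var (x : ℕ) : IPar (var x) (var x)
  | right {V V' N N'} {Ms Ms' : List Term} : isValue V → isValue V' →
      Par V V' → IPar N N' → List.Forall₂ Par Ms Ms' →
      IPar (appList (app V N) Ms) (appList (app V' N') Ms')

/-- One-hole contexts. -/
inductive Ctx1 : Type
  | hole : Ctx1
  | lam : Ctx1 → Ctx1
  | appL : Ctx1 → Term → Ctx1
  | appR : Term → Ctx1 → Ctx1

/-- Capture-allowing hole filling. -/
def fill : Ctx1 → Term → Term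
  | .hole, M => M
  | .lam C, M => lam (fill C M)
  | .appL C N, M => app (fill C M) N
  | .appR N C, M => app N (fill C M)

/-- `M` halts: head β_v-reduction from `M` reaches a value. -/
def Halts (M : Term) : Prop := ∃ V, isValue V ∧ Relation.ReflTransGen HeadBeta M V

end Term


namespace Term

def weight : Term → ℕ
  | var _ => 2
  | lam M => weight M + 1
  | app M N => weight M * weight N

lemma two_le_weight (M : Term) : 2 ≤ weight M := by
  induction M with
  | var n => simp [weight]
  | lam M ih => simp [weight]; omega
  | app M N ihM ihN =>
      simp only [weight]
      calc 2 ≤ 2 * 2 := by norm_num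
      _ ≤ weight M * weight N := Nat.mul_le_mul ihM ihN

lemma weight_lift (d : ℕ) (M : Term) : weight (lift d M) = weight M := by
  induction M generalizing d with
  | var n => simp only [lift]; split <;> rfl
  | lam M ih => simp [lift, weight, ih]
  | app M N ihM ihN => simp [lift, weight, ihM, ihN]

lemma sigmaBase_weight {M N : Term} (h : SigmaBase M N) : weight N < weight M := by
  cases h with
  | sigma1 M N L =>
      have hm := two_le_weight M
      have hn := two_le_weight N
      have hl := two_le_weight L
      simp only [weight, weight_lift]
      have : weight M * weight L + 1 < (weight M + 1) * weight L := by nlinarith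
      nlinarith
  | sigma3 V L N hV =>
      have hv := two_le_weight V
      have hl := two_le_weight L
      have hn := two_le_weight N
      simp only [weight, weight_lift]
      have : weight V * weight L + 1 < weight V * (weight L + 1) := by nlinarith
      nlinarith

lemma sigmaRed_weight {M N : Term} (h : SigmaRed M N) : weight N < weight M := by
  induction h with
  | base h => exact sigmaBase_weight h
  | lam _ ih => simpa [weight] using ih
  | appL N _ ih =>
      simp only [weight]; have := two_le_weight N; nlinarith
  | appR M _ ih =>
      simp only [weight]; have := two_le_weight M; nlinarith

end Term

open Term Relation in
theorem sigma_strongly_normalizing :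
    WellFounded (fun M N : Term => SigmaRed N M) := by
  have : Subrelation (fun M N : Term => SigmaRed N M)
      (InvImage Nat.lt Term.weight) := fun h => Term.sigmaRed_weight h
  exact this.wf (InvImage.wf Term.weight Nat.lt_wfRel.wf)
end

section
/- Substitution lemma for parallel reduction: if M ⇒ M' and V ⇒ V' (V, V' values), then M{V/x} ⇒ M'{V'/x}. -/
namespace Term

theorem par_ind (motive : Term → Term → Prop)
    (hvar : ∀ (x : ℕ) (Ms Ms' : List Term), List.Forall₂ Par Ms Ms' →
      List.Forall₂ motive Ms Ms' →
      motive (appList (var x) Ms) (appList (var x) Ms'))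
    (hlam : ∀ (M M' : Term) (Ms Ms' : List Term), Par M M' →
      List.Forall₂ Par Ms Ms' → motive M M' → List.Forall₂ motive Ms Ms' →
      motive (appList (lam M) Ms) (appList (lam M') Ms'))
    (hbeta : ∀ (M M' V V' : Term) (Ms Ms' : List Term), isValue V → isValue V' →
      Par M M' → Par V V' → List.Forall₂ Par Ms Ms' →
      motive M M' → motive V V' → List.Forall₂ motive Ms Ms' →
      motive (appList (app (lam M) V) Ms) (appList (subst M' 0 V') Ms'))
    (hsigma1 : ∀ (M M' N N' L L' : Term) (Ms Ms' : List Term),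
      Par M M' → Par N N' → Par L L' → List.Forall₂ Par Ms Ms' →
      motive M M' → motive N N' → motive L L' → List.Forall₂ motive Ms Ms' →
      motive (appList (app (app (lam M) N) L) Ms)
             (appList (app (lam (app M' (lift 0 L'))) N') Ms'))
    (hsigma3 : ∀ (V V' L L' N N' : Term) (Ms Ms' : List Term),
      isValue V → isValue V' → Par V V' → Par L L' → Par N N' →
      List.Forall₂ Par Ms Ms' →
      motive V V' → motive L L' → motive N N' → List.Forall₂ motive Ms Ms' →
      motive (appList (app V (app (lam L) N)) Ms)
             (appList (app (lam (app (lift 0 V') L')) N') Ms'))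
    (M M' : Term) (h : Par M M') : motive M M' := by
  refine Par.rec (motive_1 := fun a b _ => motive a b)
    (motive_2 := fun l l' _ => List.Forall₂ motive l l')
    ?_ ?_ ?_ ?_ ?_ ?_ ?_ h
  · exact fun x _ _ hp hm => hvar x _ _ hp hm
  · exact fun hp hps hm hms => hlam _ _ _ _ hp hps hm hms
  · exact fun hv hv' hp hpv hps hm hmv hms => hbeta _ _ _ _ _ _ hv hv' hp hpv hps hm hmv hms
  · exact fun hp hn hl hps hm hmn hml hms => hsigma1 _ _ _ _ _ _ _ _ hp hn hl hps hm hmn hml hms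
  · exact fun hv hv' hpv hl hn hps hmv hml hmn hms =>
      hsigma3 _ _ _ _ _ _ _ _ hv hv' hpv hl hn hps hmv hml hmn hms
  · exact List.Forall₂.nil
  · exact fun _ _ hm hms => List.Forall₂.cons hm hms


theorem lift_lift (e d : ℕ) (h : e ≤ d) (M : Term) :
    lift e (lift d M) = lift (d+1) (lift e M) := by
  induction M generalizing e d with
  | var n =>
    simp only [lift]
    split_ifs <;> simp only [lift] <;> split_ifs <;>
      first | rfl | (exfalso; omega) | (congr 1; omega)
  | lam M ih => simp [lift, ih (e+1) (d+1) (by omega)]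
  | app M N ihM ihN => simp [lift, ihM e d h, ihN e d h]

theorem subst_lift (k : ℕ) (M V : Term) : subst (lift k M) k V = M := by
  induction M generalizing k V with
  | var n =>
    simp only [lift]
    split_ifs <;> simp only [subst] <;> split_ifs <;>
      first | rfl | (exfalso; omega) | (congr 1; omega)
  | lam M ih => simp [lift, subst, ih]
  | app M N ihM ihN => simp [lift, subst, ihM, ihN]

theorem lift_subst_low (d k : ℕ) (h : d ≤ k) (M V : Term) :
    lift d (subst M k V) = subst (lift d M) (k+1) (lift d V) := by
  induction M generalizing d k V with
  | var n =>
    simp only [subst, lift]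
    split_ifs <;> simp only [subst, lift] <;> (try split_ifs) <;>
      first | rfl | (exfalso; omega) | (congr 1; omega)
  | lam M ih =>
    simp only [subst, lift, lam.injEq]
    rw [ih (d+1) (k+1) (by omega), lift_lift 0 d (by omega)]
  | app M N ihM ihN => simp [subst, lift, ihM d k h, ihN d k h]

theorem lift_subst_high (d k : ℕ) (h : k ≤ d) (M V : Term) :
    lift d (subst M k V) = subst (lift (d+1) M) k (lift d V) := by
  induction M generalizing d k V with
  | var n =>
    simp only [subst, lift]
    split_ifs <;> simp only [subst, lift] <;> (try split_ifs) <;>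
      first | rfl | (exfalso; omega) | (congr 1; omega)
  | lam M ih =>
    simp only [subst, lift, lam.injEq]
    rw [ih (d+1) (k+1) (by omega), lift_lift 0 d (by omega)]
  | app M N ihM ihN => simp [subst, lift, ihM d k h, ihN d k h]

theorem subst_subst (j k : ℕ) (h : j ≤ k) (M V W : Term) :
    subst (subst M j W) k V = subst (subst M (k+1) (lift j V)) j (subst W k V) := by
  induction M generalizing j k V W with
  | var n =>
    simp only [subst]
    split_ifs <;> (try simp only [subst]) <;> (try split_ifs) <;>
      first | rfl | (exfalso; omega) | (congr 1; omega) | (rw [subst_lift])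
  | lam M ih =>
    simp only [subst, lam.injEq]
    rw [ih (j+1) (k+1) (by omega), lift_lift 0 j (by omega),
        lift_subst_low 0 k (by omega)]
  | app M N ihM ihN => simp [subst, ihM j k h, ihN j k h]


theorem lift_appList (d : ℕ) (M : Term) (Ms : List Term) :
    lift d (appList M Ms) = appList (lift d M) (Ms.map (lift d)) := by
  induction Ms generalizing M with
  | nil => rfl
  | cons N Ns ih => simp [appList, ih, lift]

theorem subst_appList (k : ℕ) (V M : Term) (Ms : List Term) :
    subst (appList M Ms) k V = appList (subst M k V) (Ms.map (fun N => subst N k V)) := by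
  induction Ms generalizing M with
  | nil => rfl
  | cons N Ns ih => simp [appList, ih, subst]

theorem isValue_lift {V : Term} (d : ℕ) (h : isValue V) : isValue (lift d V) := by
  cases V <;> simp_all [isValue, lift]
  split_ifs <;> simp [isValue]

theorem isValue_subst {V W : Term} (k : ℕ) (hV : isValue V) (hW : isValue W) :
    isValue (subst V k W) := by
  cases V <;> simp_all [isValue, subst]
  split_ifs <;> simp_all [isValue]


theorem forall₂_map {α : Type*} {R : α → α → Prop} {S : α → α → Prop} {f g : α → α}
    {as bs : List α} (h : List.Forall₂ R as bs) (hf : ∀ a b, R a b → S (f a) (g b)) :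
    List.Forall₂ S (as.map f) (bs.map g) := by
  induction h with
  | nil => exact List.Forall₂.nil
  | cons hab _ ih => exact List.Forall₂.cons (hf _ _ hab) ih

theorem par_lift {M M' : Term} (h : Par M M') : ∀ d, Par (lift d M) (lift d M') := by
  refine par_ind (fun M M' => ∀ d, Par (lift d M) (lift d M')) ?_ ?_ ?_ ?_ ?_ M M' h
  case refine_1 =>
    intro x Ms Ms' hp hm
    intro d
    rw [lift_appList, lift_appList]
    have hm' := forall₂_map hm (fun a b hab => hab d)
    by_cases hx : x < d
    · rw [show lift d (var x) = var x by simp [lift, hx]]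
      exact Par.var x hm'
    · rw [show lift d (var x) = var (x+1) by simp [lift, hx]]
      exact Par.var (x+1) hm'
  case refine_2 =>
    intro M M' Ms Ms' hp hps ih ihs
    intro d
    rw [lift_appList, lift_appList]
    exact Par.lam (ih (d+1)) (forall₂_map ihs (fun a b hab => hab d))
  case refine_3 =>
    intro M M' V V' Ms Ms' hv hv' hp hpv hps ih ihv ihs
    intro d
    rw [lift_appList, lift_appList, lift_subst_high d 0 (by omega)]
    exact Par.beta (isValue_lift d hv) (isValue_lift d hv') (ih (d+1)) (ihv d)
      (forall₂_map ihs (fun a b hab => hab d))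
  case refine_4 =>
    intro M M' N N' L L' Ms Ms' hp hn hl hps ih ihn ihl ihs
    intro d
    rw [lift_appList, lift_appList]
    simp only [lift]
    rw [← lift_lift 0 d (by omega)]
    exact Par.sigma1 (ih (d+1)) (ihn d) (ihl d) (forall₂_map ihs (fun a b hab => hab d))
  case refine_5 =>
    intro V V' L L' N N' Ms Ms' hv hv' hpv hl hn hps ihv ihl ihn ihs
    intro d
    rw [lift_appList, lift_appList]
    simp only [lift]
    rw [← lift_lift 0 d (by omega)]
    exact Par.sigma3 (isValue_lift d hv) (isValue_lift d hv') (ihv d) (ihl (d+1)) (ihn d)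
      (forall₂_map ihs (fun a b hab => hab d))


theorem appList_eq_var {M : Term} {Ms : List Term} {x : ℕ}
    (h : appList M Ms = var x) : M = var x ∧ Ms = [] := by
  induction Ms generalizing M with
  | nil => exact ⟨h, rfl⟩
  | cons N Ns ih =>
    obtain ⟨h1, -⟩ := ih h
    cases h1

theorem appList_eq_lam {M : Term} {Ms : List Term} {B : Term}
    (h : appList M Ms = lam B) : M = lam B ∧ Ms = [] := by
  induction Ms generalizing M with
  | nil => exact ⟨h, rfl⟩
  | cons N Ns ih =>
    obtain ⟨h1, -⟩ := ih h
    cases h1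

theorem par_var_inv {x : ℕ} {U : Term} (h : Par (var x) U) : U = var x := by
  generalize hT : (var x : Term) = T at h
  cases h with
  | var y hMs =>
    obtain ⟨h1, h2⟩ := appList_eq_var hT.symm
    cases h1; cases h2
    cases hMs
    rfl
  | lam hp hMs => cases (appList_eq_var hT.symm).1
  | beta hv hv' hp hpv hMs =>
    obtain ⟨h1, -⟩ := appList_eq_var hT.symm; cases h1
  | sigma1 hp hn hl hMs =>
    obtain ⟨h1, -⟩ := appList_eq_var hT.symm; cases h1
  | sigma3 hv hv' hpv hl hn hMs =>
    obtain ⟨h1, -⟩ := appList_eq_var hT.symm; cases h1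

theorem par_lam_inv {B : Term} {U : Term} (h : Par (lam B) U) :
    ∃ B', U = lam B' ∧ Par B B' := by
  generalize hT : (lam B : Term) = T at h
  cases h with
  | var y hMs =>
    obtain ⟨h1, -⟩ := appList_eq_lam hT.symm; cases h1
  | @lam M M' Ms Ms' hp hMs =>
    obtain ⟨h1, h2⟩ := appList_eq_lam (M := Term.lam M) hT.symm
    cases h1; cases h2
    cases hMs
    exact ⟨M', rfl, hp⟩
  | beta hv hv' hp hpv hMs =>
    obtain ⟨h1, -⟩ := appList_eq_lam hT.symm; cases h1
  | sigma1 hp hn hl hMs =>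
    obtain ⟨h1, -⟩ := appList_eq_lam hT.symm; cases h1
  | sigma3 hv hv' hpv hl hn hMs =>
    obtain ⟨h1, -⟩ := appList_eq_lam hT.symm; cases h1

theorem par_value_appList {U U' : Term} {Ms Ms' : List Term}
    (hU : isValue U) (h : Par U U') (hMs : List.Forall₂ Par Ms Ms') :
    Par (appList U Ms) (appList U' Ms') := by
  cases U with
  | var x =>
    rw [par_var_inv h]
    exact Par.var x hMs
  | lam B =>
    obtain ⟨B', rfl, hB⟩ := par_lam_inv h
    exact Par.lam hB hMs
  | app _ _ => cases hU


end Term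

open Term Relation in
theorem par_subst {M M2 V V2 : Term} (k : ℕ) (hV : isValue V) (hV2 : isValue V2)
    (hM : Par M M2) (hpV : Par V V2) :
    Par (subst M k V) (subst M2 k V2) := by
  refine par_ind
    (fun M M2 => ∀ (k : ℕ) (V V2 : Term), isValue V → isValue V2 → Par V V2 →
      Par (subst M k V) (subst M2 k V2))
    ?_ ?_ ?_ ?_ ?_ M M2 hM k V V2 hV hV2 hpV
  case refine_1 =>
    intro x Ms Ms' hps hm k V V2 hV hV2 hpV
    rw [subst_appList, subst_appList]
    have hm' := forall₂_map hm (fun a b hab => hab k V V2 hV hV2 hpV)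
    by_cases hx : x = k
    · rw [show subst (var x) k V = V by simp [subst, hx],
          show subst (var x) k V2 = V2 by simp [subst, hx]]
      exact par_value_appList hV hpV hm'
    · by_cases hk : k < x
      · rw [show subst (var x) k V = var (x-1) by simp [subst, hx, hk],
            show subst (var x) k V2 = var (x-1) by simp [subst, hx, hk]]
        exact Par.var (x-1) hm'
      · rw [show subst (var x) k V = var x by simp [subst, hx, hk],
            show subst (var x) k V2 = var x by simp [subst, hx, hk]]
        exact Par.var x hm'
  case refine_2 =>
    intro M M' Ms Ms' hp hps ih ihs k V V2 hV hV2 hpV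
    rw [subst_appList, subst_appList]
    simp only [subst]
    exact Par.lam
      (ih (k+1) _ _ (isValue_lift 0 hV) (isValue_lift 0 hV2) (par_lift hpV 0))
      (forall₂_map ihs (fun a b hab => hab k V V2 hV hV2 hpV))
  case refine_3 =>
    intro M M' W W' Ms Ms' hw hw' hp hpw hps ih ihw ihs k V V2 hV hV2 hpV
    rw [subst_appList, subst_appList]
    simp only [subst]
    rw [subst_subst 0 k (by omega) M' V2 W']
    exact Par.beta (isValue_subst k hw hV) (isValue_subst k hw' hV2)
      (ih (k+1) _ _ (isValue_lift 0 hV) (isValue_lift 0 hV2) (par_lift hpV 0))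
      (ihw k V V2 hV hV2 hpV)
      (forall₂_map ihs (fun a b hab => hab k V V2 hV hV2 hpV))
  case refine_4 =>
    intro M M' N N' L L' Ms Ms' hp hn hl hps ih ihn ihl ihs k V V2 hV hV2 hpV
    rw [subst_appList, subst_appList]
    simp only [subst]
    rw [← lift_subst_low 0 k (by omega)]
    exact Par.sigma1
      (ih (k+1) _ _ (isValue_lift 0 hV) (isValue_lift 0 hV2) (par_lift hpV 0))
      (ihn k V V2 hV hV2 hpV) (ihl k V V2 hV hV2 hpV)
      (forall₂_map ihs (fun a b hab => hab k V V2 hV hV2 hpV))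
  case refine_5 =>
    intro W W' L L' N N' Ms Ms' hw hw' hpw hl hn hps ihw ihl ihn ihs k V V2 hV hV2 hpV
    rw [subst_appList, subst_appList]
    simp only [subst]
    rw [← lift_subst_low 0 k (by omega)]
    exact Par.sigma3 (isValue_subst k hw hV) (isValue_subst k hw' hV2)
      (ihw k V V2 hV hV2 hpV)
      (ihl (k+1) _ _ (isValue_lift 0 hV) (isValue_lift 0 hV2) (par_lift hpV 0))
      (ihn k V V2 hV hV2 hpV)
      (forall₂_map ihs (fun a b hab => hab k V V2 hV hV2 hpV))
end
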